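/- arXiv:2010.15564 — 2 statements merged into one kernel-verified Lean document; each statement's English description precedes it below -/
import Mathlib

section
/- Let P ∈ ℝ^{n×r}, Q ∈ ℝ^{ℓ×n}, R ∈ ℝ^{ℓ×r}, B ∈ ℝ^{n×m}, C ∈ ℝ^{p×n}, D ∈ ℝ^{p×m}; assume 𝒜 := { A : R = Q A P } is nonempty and C⁻¹(im D) ⊆ im P. Let 𝒥* ⊆ ℝ^r be a subspace that satisfies inclusion (13) and contains every subspace of ℝ^r satisfying inclusion (13). Then the system Σ(A,B,C,D) is left-invertible for all A ∈ 𝒜 if and only if P(𝒥*) ∩ B(ker D) = {0} and the stacked matrix [B;D] has full column rank m. -/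
open Matrix

/-- A subspace 𝒥 ⊆ ℝʳ satisfies inclusion (13). -/
def Incl13 {n r l m p : ℕ} (P : Matrix (Fin n) (Fin r) ℝ) (Q : Matrix (Fin l) (Fin n) ℝ)
    (R : Matrix (Fin l) (Fin r) ℝ) (B : Matrix (Fin n) (Fin m) ℝ)
    (C : Matrix (Fin p) (Fin n) ℝ) (D : Matrix (Fin p) (Fin m) ℝ)
    (J : Submodule ℝ (Fin r → ℝ)) : Prop :=
  ∀ v ∈ J, ∃ η : Fin m → ℝ,
    R.mulVec v + (Q * B).mulVec η ∈ Submodule.map (Q * P).mulVecLin J ∧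
    (C * P).mulVec v + D.mulVec η = 0

/-- State trajectory of the system x(t+1) = A x(t) + B u(t) from initial state x₀. -/
def stateTraj {n m : ℕ} (A : Matrix (Fin n) (Fin n) ℝ) (B : Matrix (Fin n) (Fin m) ℝ)
    (x₀ : Fin n → ℝ) (u : ℕ → Fin m → ℝ) : ℕ → Fin n → ℝ
  | 0 => x₀
  | t + 1 => A.mulVec (stateTraj A B x₀ u t) + B.mulVec (u t)

/-- Σ(A,B,C,D) is left-invertible: zero output from zero initial state implies zero input. -/
def LeftInvertible {n m p : ℕ} (A : Matrix (Fin n) (Fin n) ℝ)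
    (B : Matrix (Fin n) (Fin m) ℝ) (C : Matrix (Fin p) (Fin n) ℝ)
    (D : Matrix (Fin p) (Fin m) ℝ) : Prop :=
  ∀ u : ℕ → Fin m → ℝ,
    (∀ t : ℕ, C.mulVec (stateTraj A B 0 u t) + D.mulVec (u t) = 0) → ∀ t : ℕ, u t = 0

section Aux

variable {n r l m p : ℕ} (A : Matrix (Fin n) (Fin n) ℝ) (B : Matrix (Fin n) (Fin m) ℝ)
  (C : Matrix (Fin p) (Fin n) ℝ) (D : Matrix (Fin p) (Fin m) ℝ)

lemma stateTraj_shift (x₀ : Fin n → ℝ) (u : ℕ → Fin m → ℝ) (t s : ℕ) :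
    stateTraj A B (stateTraj A B x₀ u t) (fun k => u (t + k)) s = stateTraj A B x₀ u (t + s) := by
  induction s with
  | zero => rfl
  | succ s ih => show _ + _ = _ + _; rw [ih]; rfl

lemma stateTraj_add (x y : Fin n → ℝ) (u v : ℕ → Fin m → ℝ) (t : ℕ) :
    stateTraj A B (x + y) (fun k => u k + v k) t = stateTraj A B x u t + stateTraj A B y v t := by
  induction t with
  | zero => rfl
  | succ t ih => show _ + _ = _; rw [ih]; simp [stateTraj, mulVec_add]; abel

lemma stateTraj_smul (c : ℝ) (x : Fin n → ℝ) (u : ℕ → Fin m → ℝ) (t : ℕ) :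
    stateTraj A B (c • x) (fun k => c • u k) t = c • stateTraj A B x u t := by
  induction t with
  | zero => rfl
  | succ t ih => show _ + _ = _; rw [ih]; simp [stateTraj, mulVec_smul]

/-- Weakly unobservable subspace. -/
def Wsub : Submodule ℝ (Fin n → ℝ) where
  carrier := {x | ∃ u : ℕ → Fin m → ℝ,
    ∀ t, C.mulVec (stateTraj A B x u t) + D.mulVec (u t) = 0}
  zero_mem' := by
    refine ⟨fun _ => 0, fun t => ?_⟩
    have h0 : stateTraj A B (0 : Fin n → ℝ) (fun _ => (0 : Fin m → ℝ)) t = 0 := by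
      induction t with
      | zero => rfl
      | succ t ih => show _ + _ = _; rw [ih]; simp [mulVec_zero]
    rw [h0]; simp [mulVec_zero]
  add_mem' := by
    rintro a b ⟨u, hu⟩ ⟨v, hv⟩
    refine ⟨fun k => u k + v k, fun t => ?_⟩
    rw [stateTraj_add]
    simp only [mulVec_add]
    have := congrArg₂ (· + ·) (hu t) (hv t)
    simpa [add_add_add_comm] using this
  smul_mem' := by
    rintro c a ⟨u, hu⟩
    refine ⟨fun k => c • u k, fun t => ?_⟩
    rw [stateTraj_smul]
    simp only [mulVec_smul]
    rw [← smul_add, hu t, smul_zero]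

lemma stateTraj_mem_Wsub (x₀ : Fin n → ℝ) (u : ℕ → Fin m → ℝ)
    (hu : ∀ t, C.mulVec (stateTraj A B x₀ u t) + D.mulVec (u t) = 0) (s : ℕ) :
    stateTraj A B x₀ u s ∈ Wsub A B C D :=
  ⟨fun k => u (s + k), fun t => by rw [stateTraj_shift]; exact hu (s + t)⟩

lemma rank_fromRows_iff :
    (fromRows B D).rank = m ↔ ∀ w : Fin m → ℝ, B.mulVec w = 0 → D.mulVec w = 0 → w = 0 := by
  have hrn := LinearMap.finrank_range_add_finrank_ker (fromRows B D).mulVecLin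
  rw [Module.finrank_fin_fun] at hrn
  have hker : (fromRows B D).rank = m ↔ LinearMap.ker (fromRows B D).mulVecLin = ⊥ := by
    rw [← Submodule.finrank_eq_zero (R := ℝ)]
    unfold Matrix.rank
    omega
  rw [hker, Matrix.ker_mulVecLin_eq_bot_iff]
  constructor
  · intro h w hB hD
    apply h
    rw [fromRows_mulVec]
    ext i
    cases i with
    | inl i => simpa using congrFun hB i
    | inr i => simpa using congrFun hD i
  · intro h w hw
    rw [fromRows_mulVec] at hw
    exact h w (funext fun i => congrFun hw (Sum.inl i)) (funext fun i => congrFun hw (Sum.inr i))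

/-- Auxiliary submodule of triples (x, η, k). -/
def Tsub (Q : Matrix (Fin l) (Fin n) ℝ) (A₀ : Matrix (Fin n) (Fin n) ℝ)
    (S : Submodule ℝ (Fin n → ℝ)) :
    Submodule ℝ ((Fin n → ℝ) × (Fin m → ℝ) × (Fin n → ℝ)) where
  carrier := {x | x.1 ∈ S ∧ A₀.mulVec x.1 + B.mulVec x.2.1 - x.2.2 ∈ S ∧
    Q.mulVec x.2.2 = 0 ∧ C.mulVec x.1 + D.mulVec x.2.1 = 0}
  zero_mem' := by
    refine ⟨S.zero_mem, ?_, ?_, ?_⟩ <;> simp [mulVec_zero, S.zero_mem]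
  add_mem' := by
    rintro a b ⟨ha1, ha2, ha3, ha4⟩ ⟨hb1, hb2, hb3, hb4⟩
    refine ⟨S.add_mem ha1 hb1, ?_, ?_, ?_⟩
    · have := S.add_mem ha2 hb2
      convert this using 1
      simp only [Prod.fst_add, Prod.snd_add, mulVec_add]
      abel
    · show Q.mulVec (a.2.2 + b.2.2) = 0
      rw [mulVec_add, ha3, hb3, add_zero]
    · show C.mulVec (a.1 + b.1) + D.mulVec (a.2.1 + b.2.1) = 0
      rw [mulVec_add, mulVec_add, add_add_add_comm, ha4, hb4, add_zero]
  smul_mem' := by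
    rintro c a ⟨ha1, ha2, ha3, ha4⟩
    refine ⟨S.smul_mem c ha1, ?_, ?_, ?_⟩
    · have := S.smul_mem c ha2
      convert this using 1
      simp only [Prod.smul_fst, Prod.smul_snd, mulVec_smul, smul_sub, smul_add]
    · show Q.mulVec (c • a.2.2) = 0
      rw [mulVec_smul, ha3, smul_zero]
    · show C.mulVec (c • a.1) + D.mulVec (c • a.2.1) = 0
      rw [mulVec_smul, mulVec_smul, ← smul_add, ha4, smul_zero]

lemma exists_good_A (P : Matrix (Fin n) (Fin r) ℝ) (Q : Matrix (Fin l) (Fin n) ℝ)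
    (R : Matrix (Fin l) (Fin r) ℝ)
    (A₀ : Matrix (Fin n) (Fin n) ℝ) (hA₀ : R = Q * A₀ * P)
    (Jstar : Submodule ℝ (Fin r → ℝ)) (hJ : Incl13 P Q R B C D Jstar) :
    ∃ A : Matrix (Fin n) (Fin n) ℝ, R = Q * A * P ∧
      ∀ x ∈ Submodule.map P.mulVecLin Jstar, ∃ η : Fin m → ℝ,
        A.mulVec x + B.mulVec η ∈ Submodule.map P.mulVecLin Jstar ∧
        C.mulVec x + D.mulVec η = 0 := by
  set S := Submodule.map P.mulVecLin Jstar with hS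
  set T := Tsub B C D Q A₀ S with hT
  set pmap : T →ₗ[ℝ] S :=
    LinearMap.codRestrict S ((LinearMap.fst ℝ (Fin n → ℝ) ((Fin m → ℝ) × (Fin n → ℝ))).comp
      T.subtype) (fun x => x.2.1) with hpmap
  have hsurj : Function.Surjective pmap := by
    rintro ⟨z, hz⟩
    obtain ⟨v, hv, rfl⟩ := hz
    obtain ⟨η, hmem, hout⟩ := hJ v hv
    obtain ⟨v', hv', hv'eq⟩ := hmem
    refine ⟨⟨(P.mulVecLin v, η, A₀.mulVec (P.mulVecLin v) + B.mulVec η - P.mulVec v'),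
      ⟨v, hv, rfl⟩, ?_, ?_, ?_⟩, rfl⟩
    · show A₀.mulVec (P.mulVecLin v) + B.mulVec η -
        (A₀.mulVec (P.mulVecLin v) + B.mulVec η - P.mulVec v') ∈ S
      rw [sub_sub_cancel]
      exact ⟨v', hv', rfl⟩
    · show Q.mulVec (A₀.mulVec (P.mulVecLin v) + B.mulVec η - P.mulVec v') = 0
      rw [mulVec_sub, mulVec_add, mulVecLin_apply]
      simp only [mulVec_mulVec]
      rw [← Matrix.mul_assoc, ← hA₀]
      rw [mulVecLin_apply] at hv'eq
      rw [sub_eq_zero]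
      exact hv'eq.symm
    · show C.mulVec (P.mulVecLin v) + D.mulVec η = 0
      rw [mulVecLin_apply, mulVec_mulVec]
      exact hout
  obtain ⟨σ, hσ⟩ := pmap.exists_rightInverse_of_surjective (LinearMap.range_eq_top.2 hsurj)
  obtain ⟨S', hS'⟩ := Submodule.exists_isCompl S
  set π : (Fin n → ℝ) →ₗ[ℝ] S := S.linearProjOfIsCompl S' hS' with hπdef
  set proj3 : ((Fin n → ℝ) × (Fin m → ℝ) × (Fin n → ℝ)) →ₗ[ℝ] (Fin n → ℝ) :=
    (LinearMap.snd ℝ (Fin m → ℝ) (Fin n → ℝ)).comp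
      (LinearMap.snd ℝ (Fin n → ℝ) ((Fin m → ℝ) × (Fin n → ℝ))) with hproj3
  set kmap : (Fin n → ℝ) →ₗ[ℝ] (Fin n → ℝ) :=
    -(proj3.comp ((T.subtype.comp σ).comp π)) with hkmap
  set Fmat : Matrix (Fin n) (Fin n) ℝ := LinearMap.toMatrix' kmap with hFmat
  have hF : Fmat.mulVecLin = kmap := by
    rw [hFmat, ← Matrix.toLin'_apply']
    exact LinearEquiv.symm_apply_apply _ _
  have hQk : ∀ x, Q.mulVec (kmap x) = 0 := by
    intro x
    have hmem := (σ (π x)).2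
    have h3 : Q.mulVec ((σ (π x)).1.2.2) = 0 := hmem.2.2.1
    show Q.mulVec (-(proj3 ((T.subtype.comp σ).comp π x))) = 0
    rw [mulVec_neg]
    simp only [LinearMap.comp_apply, Submodule.subtype_apply, hproj3, LinearMap.snd_apply]
    rw [h3, neg_zero]
  have hQF : Q * Fmat = 0 := by
    have h0 : Matrix.toLin' (Q * Fmat) = 0 := by
      rw [Matrix.toLin'_apply', Matrix.mulVecLin_mul, hF]
      apply LinearMap.ext
      intro x
      simpa [Matrix.mulVecLin_apply] using hQk x
    have := congrArg Matrix.toLin'.symm h0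
    rwa [LinearEquiv.symm_apply_apply, map_zero] at this
  refine ⟨A₀ + Fmat, ?_, ?_⟩
  · rw [Matrix.mul_add, Matrix.add_mul, hQF, Matrix.zero_mul, add_zero, ← hA₀]
  · intro x hx
    set zS : S := ⟨x, hx⟩ with hzS
    have h1 : ((σ zS : T) : (Fin n → ℝ) × (Fin m → ℝ) × (Fin n → ℝ)).1 = x := by
      have := LinearMap.congr_fun hσ zS
      have h2 := congrArg Subtype.val this
      exact h2
    have hπx : π x = zS := Submodule.linearProjOfIsCompl_apply_left hS' zS
    have hFx : Fmat.mulVec x = -(((σ zS : T) :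
        (Fin n → ℝ) × (Fin m → ℝ) × (Fin n → ℝ)).2.2) := by
      have := DFunLike.congr_fun hF x
      rw [Matrix.mulVecLin_apply] at this
      rw [this]
      show -(proj3 ((T.subtype.comp σ).comp π x)) = _
      simp only [LinearMap.comp_apply, Submodule.subtype_apply, hπx, hproj3,
        LinearMap.snd_apply]
    refine ⟨((σ zS : T) : (Fin n → ℝ) × (Fin m → ℝ) × (Fin n → ℝ)).2.1, ?_, ?_⟩
    · have hmem := (σ zS).2.2.1
      rw [h1] at hmem
      rw [add_mulVec, hFx]
      convert hmem using 1
      abel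
    · have hout := (σ zS).2.2.2.2
      rw [h1] at hout
      exact hout

/-- Trajectory generated by a feedback selection `g`, starting with input `w` at time 0. -/
def trajAux (g : (Fin n → ℝ) → (Fin m → ℝ)) (w : Fin m → ℝ) :
    ℕ → (Fin n → ℝ) × (Fin m → ℝ)
  | 0 => ((0 : Fin n → ℝ), w)
  | t + 1 =>
    (A.mulVec (trajAux g w t).1 + B.mulVec (trajAux g w t).2,
      g (A.mulVec (trajAux g w t).1 + B.mulVec (trajAux g w t).2))

end Aux

/-- geometric characterization of left-invertibility for all A ∈ 𝒜. -/
theorem left_invertible_all_iff_geometric (n r l m p : ℕ)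
    (P : Matrix (Fin n) (Fin r) ℝ) (Q : Matrix (Fin l) (Fin n) ℝ)
    (R : Matrix (Fin l) (Fin r) ℝ)
    (B : Matrix (Fin n) (Fin m) ℝ) (C : Matrix (Fin p) (Fin n) ℝ)
    (D : Matrix (Fin p) (Fin m) ℝ)
    (hne : ∃ A : Matrix (Fin n) (Fin n) ℝ, R = Q * A * P)
    (hCD : (LinearMap.range D.mulVecLin).comap C.mulVecLin ≤ LinearMap.range P.mulVecLin)
    (Jstar : Submodule ℝ (Fin r → ℝ))
    (hJ : Incl13 P Q R B C D Jstar)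
    (hJmax : ∀ J : Submodule ℝ (Fin r → ℝ), Incl13 P Q R B C D J → J ≤ Jstar) :
    (∀ A : Matrix (Fin n) (Fin n) ℝ, R = Q * A * P → LeftInvertible A B C D) ↔
      (Submodule.map P.mulVecLin Jstar ⊓
          Submodule.map B.mulVecLin (LinearMap.ker D.mulVecLin) = ⊥ ∧
        (fromRows B D).rank = m) := by
  constructor
  · intro hLI
    obtain ⟨A₀, hA₀⟩ := hne
    obtain ⟨A, hA, hinv⟩ := exists_good_A B C D P Q R A₀ hA₀ Jstar hJ
    constructor
    · rw [Submodule.eq_bot_iff]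
      rintro z ⟨hz1, hz2⟩
      obtain ⟨w, hw, rfl⟩ := hz2
      have hwD : D.mulVec w = 0 := hw
      classical
      set S := Submodule.map P.mulVecLin Jstar with hSdef
      set g : (Fin n → ℝ) → (Fin m → ℝ) :=
        fun x => if hx : x ∈ S then (hinv x hx).choose else 0 with hgdef
      have hg : ∀ x (hx : x ∈ S),
          A.mulVec x + B.mulVec (g x) ∈ S ∧ C.mulVec x + D.mulVec (g x) = 0 := by
        intro x hx
        rw [hgdef]
        simp only [dif_pos hx]
        exact (hinv x hx).choose_spec
      set f : ℕ → (Fin n → ℝ) × (Fin m → ℝ) := trajAux A B g w with hfdef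
      have hfx : ∀ t, stateTraj A B 0 (fun k => (f k).2) t = (f t).1 := by
        intro t
        induction t with
        | zero => rfl
        | succ t ih => show _ + _ = _; rw [ih]; rfl
      have hsnd : ∀ t, (f (t + 1)).2 = g ((f (t + 1)).1) := fun t => rfl
      have hmem : ∀ t, (f (t + 1)).1 ∈ S := by
        intro t
        induction t with
        | zero =>
          show A.mulVec 0 + B.mulVec w ∈ S
          rw [mulVec_zero, zero_add]
          exact hz1
        | succ t ih =>
          show A.mulVec ((f (t + 1)).1) + B.mulVec ((f (t + 1)).2) ∈ S
          rw [hsnd t]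
          exact (hg _ ih).1
      have hout : ∀ t, C.mulVec (stateTraj A B 0 (fun k => (f k).2) t) +
          D.mulVec ((f t).2) = 0 := by
        intro t
        rw [hfx]
        cases t with
        | zero =>
          show C.mulVec 0 + D.mulVec w = 0
          rw [mulVec_zero, zero_add]
          exact hwD
        | succ t =>
          rw [hsnd t]
          exact (hg _ (hmem t)).2
      have hw0 : w = 0 := hLI A hA (fun k => (f k).2) hout 0
      rw [hw0, map_zero]
    · rw [rank_fromRows_iff]
      intro w hB hD
      have hx : ∀ t, stateTraj A₀ B 0 (fun _ => w) t = 0 := by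
        intro t
        induction t with
        | zero => rfl
        | succ t ih => show _ + _ = _; rw [ih, hB, mulVec_zero, zero_add]
      exact hLI A₀ hA₀ (fun _ => w)
        (fun t => by rw [hx t, mulVec_zero, zero_add]; exact hD) 0
  · rintro ⟨hinf, hrank⟩ A hA u hu
    have hker := (rank_fromRows_iff B D).mp hrank
    set W := Wsub A B C D with hW
    have hWsub : W ≤ Submodule.map P.mulVecLin Jstar := by
      set Jw := Submodule.comap P.mulVecLin W with hJw
      have hWim : ∀ x ∈ W, x ∈ Submodule.map P.mulVecLin Jw := by
        intro x hx
        obtain ⟨u₀, hu₀⟩ := hx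
        have h0 : C.mulVec x + D.mulVec (u₀ 0) = 0 := hu₀ 0
        have hxP : x ∈ LinearMap.range P.mulVecLin := by
          apply hCD
          rw [Submodule.mem_comap]
          refine ⟨-(u₀ 0), ?_⟩
          rw [map_neg]
          show -(D.mulVec (u₀ 0)) = C.mulVec x
          exact neg_eq_of_add_eq_zero_right (by rw [add_comm]; exact h0)
        obtain ⟨v, hv⟩ := hxP
        refine ⟨v, ?_, hv⟩
        show P.mulVecLin v ∈ W
        rw [hv]
        exact ⟨u₀, hu₀⟩
      have hJwIncl : Incl13 P Q R B C D Jw := by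
        intro v hv
        rw [hJw, Submodule.mem_comap] at hv
        obtain ⟨u₀, hu₀⟩ := hv
        refine ⟨u₀ 0, ?_, ?_⟩
        · have hx1 : A.mulVec (P.mulVecLin v) + B.mulVec (u₀ 0) ∈ W := by
            have := stateTraj_mem_Wsub A B C D (P.mulVecLin v) u₀ hu₀ 1
            simpa [stateTraj] using this
          obtain ⟨v', hv', hv'eq⟩ := hWim _ hx1
          refine ⟨v', hv', ?_⟩
          rw [mulVecLin_apply, ← mulVec_mulVec]
          simp only [mulVecLin_apply] at hv'eq
          rw [hv'eq, mulVec_add]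
          simp only [mulVec_mulVec]
          rw [← Matrix.mul_assoc, ← hA]
        · show (C * P).mulVec v + D.mulVec (u₀ 0) = 0
          rw [← mulVec_mulVec]
          exact hu₀ 0
      have hle := hJmax Jw hJwIncl
      intro x hx
      obtain ⟨v, hv, hveq⟩ := hWim x hx
      exact ⟨v, hle hv, hveq⟩
    have key : ∀ t, stateTraj A B 0 u t = 0 → u t = 0 := by
      intro t hxt
      have hD : D.mulVec (u t) = 0 := by
        have := hu t
        rw [hxt, mulVec_zero, zero_add] at this
        exact this
      have hx1 : B.mulVec (u t) ∈ W := by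
        have := stateTraj_mem_Wsub A B C D 0 u hu (t + 1)
        rw [show stateTraj A B 0 u (t + 1) =
          A.mulVec (stateTraj A B 0 u t) + B.mulVec (u t) from rfl, hxt, mulVec_zero,
          zero_add] at this
        exact this
      have hB0 : B.mulVec (u t) = 0 := by
        have hmem : B.mulVec (u t) ∈ Submodule.map P.mulVecLin Jstar ⊓
            Submodule.map B.mulVecLin (LinearMap.ker D.mulVecLin) :=
          ⟨hWsub hx1, ⟨u t, hD, rfl⟩⟩
        rw [hinf] at hmem
        exact hmem
      exact hker _ hB0 hD
    intro t
    have hx : ∀ s, stateTraj A B 0 u s = 0 := by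
      intro s
      induction s with
      | zero => rfl
      | succ s ih =>
        show A.mulVec _ + B.mulVec (u s) = 0
        rw [ih, mulVec_zero, zero_add, key s ih, mulVec_zero]
    exact key t (hx t)
end

section
/- Independent process noise case: in the data setting with F = 0 and E ∈ ℝ^{n×q} arbitrary (so that 𝒜_dat = { A ∈ ℝ^{n×n} : ∃ W₋ ∈ ℝ^{q×T} with X₊ = A X₋ + B U₋ + E W₋ }; assume 𝒜_dat ≠ ∅), let M ∈ ℝ^{k×n} be such that ker M = im E. Then rank [A − λI, B] = n for every A ∈ 𝒜_dat and every λ ∈ ℂ (informativity for controllability) if and only if ker M ⊆ im B and rank [M X₊ − λ M X₋, M B] = rank M for all λ ∈ ℂ; and rank [A − λI, B] = n for every A ∈ 𝒜_dat and every λ with |λ| ≥ 1 (informativity for stabilizability) if and only if ker M ⊆ im B and rank [M X₊ − λ M X₋, M B] = rank M for all λ ∈ ℂ with |λ| ≥ 1. -/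
open Matrix

/-- Complexification of a real matrix. -/
noncomputable def cx {a b : ℕ} (M : Matrix (Fin a) (Fin b) ℝ) : Matrix (Fin a) (Fin b) ℂ :=
  M.map (algebraMap ℝ ℂ)

/-- First T columns of the state data matrix X. -/
def Xminus {n T : ℕ} (X : Matrix (Fin n) (Fin (T + 1)) ℝ) : Matrix (Fin n) (Fin T) ℝ :=
  Matrix.of fun i t => X i t.castSucc

/-- Last T columns of the state data matrix X. -/
def Xplus {n T : ℕ} (X : Matrix (Fin n) (Fin (T + 1)) ℝ) : Matrix (Fin n) (Fin T) ℝ :=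
  Matrix.of fun i t => X i t.succ

/-- The set of state matrices A consistent with the data in the case of
(independent) process noise only (F = 0). -/
def AdatP {n m q T : ℕ} (B : Matrix (Fin n) (Fin m) ℝ) (E : Matrix (Fin n) (Fin q) ℝ)
    (U : Matrix (Fin m) (Fin T) ℝ) (X : Matrix (Fin n) (Fin (T + 1)) ℝ) :
    Set (Matrix (Fin n) (Fin n) ℝ) :=
  {A | ∃ W : Matrix (Fin q) (Fin T) ℝ, Xplus X = A * Xminus X + B * U + E * W}

/-!
By the Hautus test, rank [A - λI, B] < n exactly when some row vector ξ ≠ 0 has ξ A = λ ξ and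
ξ B = 0. Since ker M = im E, the row space of M is the left kernel of E, so the data condition at
λ says: no ξ ≠ 0 with ξ E = 0 and ξ B = 0 satisfies ξ X₊ = λ ξ X₋. Sufficiency: if im E ⊆ im B,
a left eigenvector ξ of a consistent A with ξ B = 0 also has ξ E = 0, and then
ξ X₊ = ξ A X₋ = λ ξ X₋.

Necessity: A₀ + Θ is consistent whenever Θ X₋ ∈ im E. If x ∈ im E lies outside im B, pick a with
a B = 0 and a x ≠ 0; a rank-one Θ along x makes a a left eigenvector of A₀ + Θ for the
eigenvalue 1. If a data vector ξ ≠ 0 violates the condition at λ, a real Θ with Θ X₋ = 0 and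
ξ Θ = λ ξ - ξ A₀ makes ξ a left eigenvector for λ. Such Θ exists when Re ξ and Im ξ are
independent; otherwise ξ is a multiple of a real vector w, and either λ is real or w annihilates
X₋ and X₊, in which case the eigenvalue 1 serves instead.
-/

open Module

namespace Matrix

section Field

variable {K : Type*} [Field K] {l m n o : Type*} [Fintype m] [Fintype n]

theorem rank_add_finrank_ker_vecMulLinear (A : Matrix m n K) :
    A.rank + finrank K (LinearMap.ker A.vecMulLinear) = Fintype.card m := by
  rw [← rank_transpose, rank, mulVecLin_transpose, LinearMap.finrank_range_add_finrank_ker,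
    finrank_fintype_fun_eq_card]

theorem rank_eq_card_iff (A : Matrix m n K) :
    A.rank = Fintype.card m ↔ ∀ v, v ᵥ* A = 0 → v = 0 := by
  rw [← A.rank_add_finrank_ker_vecMulLinear, left_eq_add, Submodule.finrank_eq_zero,
    LinearMap.ker_eq_bot']
  rfl

theorem rank_mul_eq_rank_iff [Fintype l] (A : Matrix l m K) (B : Matrix m n K) :
    (A * B).rank = A.rank ↔ ∀ v, v ᵥ* (A * B) = 0 → v ᵥ* A = 0 := by
  have hle : LinearMap.ker A.vecMulLinear ≤ LinearMap.ker (A * B).vecMulLinear := by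
    intro v hv
    simp_all [← vecMul_vecMul]
  have hA := A.rank_add_finrank_ker_vecMulLinear
  have hAB := (A * B).rank_add_finrank_ker_vecMulLinear
  constructor
  · intro h v hv
    have hker := Submodule.eq_of_le_of_finrank_eq hle (by omega)
    exact (hker ▸ hv : v ∈ LinearMap.ker A.vecMulLinear)
  · intro h
    have hker : LinearMap.ker (A * B).vecMulLinear = LinearMap.ker A.vecMulLinear :=
      le_antisymm (fun v hv => h v hv) hle
    rw [hker] at hAB
    omega

theorem ker_mulVecLin_eq_range_iff (A : Matrix l m K) (B : Matrix m n K) :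
    LinearMap.ker A.mulVecLin = LinearMap.range B.mulVecLin ↔
      A * B = 0 ∧ A.rank + B.rank = Fintype.card m := by
  have hAB : A * B = 0 ↔ LinearMap.range B.mulVecLin ≤ LinearMap.ker A.mulVecLin := by
    classical
    rw [LinearMap.range_le_ker_iff, ← mulVecLin_mul, ← toLin'_apply', LinearEquiv.map_eq_zero_iff]
  have hA := LinearMap.finrank_range_add_finrank_ker A.mulVecLin
  rw [finrank_fintype_fun_eq_card] at hA
  rw [hAB, rank, rank]
  constructor
  · intro h
    rw [h] at hA ⊢
    exact ⟨le_rfl, hA⟩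
  · rintro ⟨hle, hrank⟩
    exact (Submodule.eq_of_le_of_finrank_eq hle (by omega)).symm

theorem exists_vecMul_eq_of_ker_eq_range [Fintype l] {A : Matrix l m K} {B : Matrix m n K}
    (h : LinearMap.ker A.mulVecLin = LinearMap.range B.mulVecLin) {v : m → K}
    (hv : v ᵥ* B = 0) : ∃ u, u ᵥ* A = v := by
  obtain ⟨hAB, hrank⟩ := (ker_mulVecLin_eq_range_iff A B).mp h
  have hT : LinearMap.ker Bᵀ.mulVecLin = LinearMap.range Aᵀ.mulVecLin := by
    rw [ker_mulVecLin_eq_range_iff, ← transpose_mul, hAB, transpose_zero, rank_transpose,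
      rank_transpose]
    exact ⟨rfl, by omega⟩
  obtain ⟨u, hu⟩ : v ∈ LinearMap.range Aᵀ.mulVecLin := by
    rw [← hT, LinearMap.mem_ker, mulVecLin_apply, mulVec_transpose, hv]
  exact ⟨u, by rwa [mulVecLin_apply, mulVec_transpose] at hu⟩

theorem exists_mul_eq_of_range_le {A : Matrix l m K} {B : Matrix l n K}
    (h : LinearMap.range B.mulVecLin ≤ LinearMap.range A.mulVecLin) :
    ∃ C : Matrix m n K, A * C = B := by
  classical
  have hcol (j : n) : ∃ c, A *ᵥ c = B.col j := by
    obtain ⟨c, hc⟩ := h ⟨Pi.single j 1, rfl⟩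
    exact ⟨c, by rw [mulVecLin_apply] at hc; rw [hc, mulVecLin_apply, mulVec_single_one]⟩
  choose c hc using hcol
  refine ⟨(of c)ᵀ, ?_⟩
  ext i j
  exact congrFun (hc j) i

theorem exists_vecMul_eq_zero_dotProduct_ne_zero {A : Matrix m n K} {x : m → K}
    (hx : x ∉ LinearMap.range A.mulVecLin) : ∃ v, v ᵥ* A = 0 ∧ v ⬝ᵥ x ≠ 0 := by
  classical
  obtain ⟨f, hfx, hf⟩ := Submodule.exists_dual_map_eq_bot_of_notMem hx inferInstance
  have hdot (y : m → K) : (dotProductEquiv K m).symm f ⬝ᵥ y = f y := by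
    conv_rhs => rw [← (dotProductEquiv K m).apply_symm_apply f]
    rfl
  refine ⟨(dotProductEquiv K m).symm f, ?_, by rwa [hdot]⟩
  rw [← dotProduct_eq_zero_iff]
  intro z
  rw [← dotProduct_mulVec, hdot]
  have hz := Submodule.mem_map_of_mem (f := f) (LinearMap.mem_range_self A.mulVecLin z)
  rwa [hf, Submodule.mem_bot] at hz

theorem exists_mul_eq_one_of_linearIndependent_row [DecidableEq m] {A : Matrix m n K}
    (hA : LinearIndependent K A.row) : ∃ C : Matrix n m K, A * C = 1 := by
  classical
  have hker : LinearMap.ker Aᵀ.mulVecLin = ⊥ := by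
    rw [mulVecLin_transpose, LinearMap.ker_eq_bot]
    exact vecMul_injective_iff.mpr hA
  obtain ⟨g, hg⟩ := Aᵀ.mulVecLin.exists_leftInverse_of_injective hker
  refine ⟨(LinearMap.toMatrix' g)ᵀ, ?_⟩
  have hgA : LinearMap.toMatrix' g * Aᵀ = 1 := by
    apply toLin'.injective
    rw [toLin'_mul, toLin'_toMatrix', toLin'_apply', hg, toLin'_one]
  rw [← transpose_transpose (A * _), transpose_mul, transpose_transpose, hgA, transpose_one]

theorem exists_mul_eq_zero_vecMul_eq {p : Type*} [Fintype p] {w : m → K} (hw : w ≠ 0)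
    {c : p → K} {N : Matrix p o K} (hc : c ᵥ* N = 0) :
    ∃ Θ : Matrix m p K, Θ * N = 0 ∧ w ᵥ* Θ = c := by
  obtain ⟨u, hu⟩ : ∃ u, w ⬝ᵥ u ≠ 0 := by
    by_contra! h
    exact hw (dotProduct_eq_zero_iff.mp h)
  refine ⟨vecMulVec ((w ⬝ᵥ u)⁻¹ • u) c, ?_, ?_⟩
  · rw [vecMulVec_mul, hc]
    ext
    simp [vecMulVec_apply]
  · rw [vecMul_vecMulVec, dotProduct_smul, smul_eq_mul, inv_mul_cancel₀ hu, one_smul]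

theorem rank_fromCols_mul_eq_rank_iff [Fintype l] [Fintype o] {p : Type*} [Fintype p]
    {A : Matrix l m K} {E : Matrix m o K}
    (h : LinearMap.ker A.mulVecLin = LinearMap.range E.mulVecLin) (P : Matrix m n K)
    (Q : Matrix m p K) :
    (fromCols (A * P) (A * Q)).rank = A.rank ↔
      ∀ v, v ᵥ* E = 0 → v ᵥ* P = 0 → v ᵥ* Q = 0 → v = 0 := by
  obtain ⟨hAE, -⟩ := (ker_mulVecLin_eq_range_iff A E).mp h
  rw [← mul_fromCols, rank_mul_eq_rank_iff]
  simp only [← vecMul_vecMul, vecMul_fromCols, ← Sum.elim_zero_zero, Sum.elim_eq_iff]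
  constructor
  · intro hrank v hE hP hQ
    obtain ⟨u, rfl⟩ := exists_vecMul_eq_of_ker_eq_range h hE
    exact hrank u ⟨hP, hQ⟩
  · rintro hleft u ⟨hP, hQ⟩
    exact hleft _ (by rw [vecMul_vecMul, hAE, vecMul_zero]) hP hQ

variable (A : Matrix n n K) (B : Matrix n m K) (μ : K)

def IsUncontrollableEigenvalue : Prop :=
  ∃ v : n → K, v ≠ 0 ∧ v ᵥ* A = μ • v ∧ v ᵥ* B = 0

theorem rank_fromCols_sub_smul_one_eq_card_iff [DecidableEq n] :
    (fromCols (A - μ • 1) B).rank = Fintype.card n ↔ ¬ A.IsUncontrollableEigenvalue B μ := by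
  simp only [rank_eq_card_iff, vecMul_fromCols, ← Sum.elim_zero_zero, Sum.elim_eq_iff,
    vecMul_sub, vecMul_smul, vecMul_one, sub_eq_zero, IsUncontrollableEigenvalue]
  grind

end Field

theorem vecMul_vecMul_eq_of_eq_add {R : Type*} [Semiring R] {n m q t : Type*} [Fintype n]
    [Fintype m] [Fintype q] {Xp Xm : Matrix n t R} {A : Matrix n n R} {B : Matrix n m R}
    {U : Matrix m t R} {E : Matrix n q R} {W : Matrix q t R} (h : Xp = A * Xm + B * U + E * W)
    {v : n → R} (hB : v ᵥ* B = 0) (hE : v ᵥ* E = 0) : v ᵥ* A ᵥ* Xm = v ᵥ* Xp := by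
  rw [h, vecMul_add, vecMul_add, ← vecMul_vecMul v B, ← vecMul_vecMul v E, hB, hE, zero_vecMul,
    zero_vecMul, add_zero, add_zero, vecMul_vecMul]

end Matrix

section Complexification

def cxVec {ι : Type*} (v : ι → ℝ) : ι → ℂ := fun i => v i

theorem cxVec_injective {ι : Type*} : Function.Injective (cxVec : (ι → ℝ) → ι → ℂ) :=
  fun _ _ h => funext fun i => Complex.ofReal_injective (congrFun h i)

@[simp]
theorem cxVec_eq_zero_iff {ι : Type*} {v : ι → ℝ} : cxVec v = 0 ↔ v = 0 :=
  cxVec_injective.eq_iff' (funext fun _ => Complex.ofReal_zero)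

theorem funext_re_im {ι : Type*} {ξ ζ : ι → ℂ} (hre : Complex.re ∘ ξ = Complex.re ∘ ζ)
    (him : Complex.im ∘ ξ = Complex.im ∘ ζ) : ξ = ζ :=
  funext fun i => Complex.ext (congrFun hre i) (congrFun him i)

theorem linearIndependent_re_im_or_exists_eq_smul_cxVec {ι : Type*} (ξ : ι → ℂ) :
    LinearIndependent ℝ ![Complex.re ∘ ξ, Complex.im ∘ ξ] ∨
      ∃ (γ : ℂ) (w : ι → ℝ), ξ = γ • cxVec w := by
  by_cases hre : Complex.re ∘ ξ = 0
  · refine .inr ⟨Complex.I, Complex.im ∘ ξ, funext fun i => Complex.ext ?_ ?_⟩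
    · simpa [cxVec] using congrFun hre i
    · simp [cxVec]
  rw [LinearIndependent.pair_iff' hre, or_iff_not_imp_left, not_forall_not]
  rintro ⟨t, ht⟩
  refine ⟨1 + t * Complex.I, Complex.re ∘ ξ, funext fun i => Complex.ext ?_ ?_⟩
  · simp [cxVec]
  · simpa [cxVec, mul_comm] using (congrFun ht i).symm

theorem exists_ofReal_mem_and_eq_smul {ι : Type*} {S : Set ℂ} (hS : 1 ∈ S) {lam : ℂ}
    (hlam : lam ∈ S) {x y : ι → ℝ} (h : cxVec y = lam • cxVec x) :
    ∃ μ : ℝ, (μ : ℂ) ∈ S ∧ y = μ • x := by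
  by_cases him : lam.im = 0
  · have hre : (lam.re : ℂ) = lam := Complex.ext rfl (by simp [him])
    refine ⟨lam.re, hre ▸ hlam, funext fun i => ?_⟩
    simpa [cxVec, him] using congrArg Complex.re (congrFun h i)
  · have hx : x = 0 := funext fun i => by
      simpa [cxVec, him] using congrArg Complex.im (congrFun h i)
    refine ⟨1, by rwa [Complex.ofReal_one], ?_⟩
    rw [hx, smul_zero, ← cxVec_eq_zero_iff, h, hx, cxVec_eq_zero_iff.mpr rfl, smul_zero]

variable {a b c : ℕ}

theorem cx_mul (M : Matrix (Fin a) (Fin b) ℝ) (N : Matrix (Fin b) (Fin c) ℝ) :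
    cx (M * N) = cx M * cx N :=
  Matrix.map_mul

theorem cx_add (M N : Matrix (Fin a) (Fin b) ℝ) : cx (M + N) = cx M + cx N :=
  Matrix.map_add _ (map_add _) M N

theorem cxVec_vecMul (v : Fin a → ℝ) (M : Matrix (Fin a) (Fin b) ℝ) :
    cxVec v ᵥ* cx M = cxVec (v ᵥ* M) :=
  funext fun j => (RingHom.map_vecMul (algebraMap ℝ ℂ) M v j).symm

theorem re_vecMul_cx (ξ : Fin a → ℂ) (M : Matrix (Fin a) (Fin b) ℝ) :
    Complex.re ∘ (ξ ᵥ* cx M) = (Complex.re ∘ ξ) ᵥ* M := by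
  ext j
  simp [vecMul, dotProduct, cx, Complex.re_sum]

theorem im_vecMul_cx (ξ : Fin a → ℂ) (M : Matrix (Fin a) (Fin b) ℝ) :
    Complex.im ∘ (ξ ᵥ* cx M) = (Complex.im ∘ ξ) ᵥ* M := by
  ext j
  simp [vecMul, dotProduct, cx, Complex.im_sum]

theorem rank_cx (M : Matrix (Fin a) (Fin b) ℝ) : (cx M).rank = M.rank := by
  obtain ⟨κ, s, hs, hspan, hli⟩ := exists_linearIndependent' ℝ M.col
  have : Fintype κ := have := Finite.of_injective s hs; Fintype.ofFinite κ
  have hcol : (cx M).col = fun j => algebraMap ℝ ℂ ∘ M.col j := rfl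
  have hliC : LinearIndependent ℂ ((cx M).col ∘ s) := by
    rw [hcol]
    exact linearIndependent_algebraMap_comp_iff.mpr hli
  have hspanC : Submodule.span ℂ (Set.range ((cx M).col ∘ s)) =
      Submodule.span ℂ (Set.range (cx M).col) := by
    refine le_antisymm (Submodule.span_mono (Set.range_comp_subset_range _ _))
      (Submodule.span_le.mpr ?_)
    rintro _ ⟨j, rfl⟩
    have hj : M.col j ∈ Submodule.span ℝ (Set.range (M.col ∘ s)) :=
      hspan ▸ Submodule.subset_span ⟨j, rfl⟩
    have hφj := Submodule.mem_map_of_mem (f := (Algebra.linearMap ℝ ℂ).compLeft (Fin a)) hj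
    rw [Submodule.map_span, ← Set.range_comp] at hφj
    exact Submodule.span_le_restrictScalars ℝ ℂ _ hφj
  rw [rank_eq_finrank_span_cols, rank_eq_finrank_span_cols, ← hspanC, ← hspan,
    finrank_span_eq_card hliC, finrank_span_eq_card hli]

theorem ker_mulVecLin_cx_eq_range {M : Matrix (Fin a) (Fin b) ℝ} {E : Matrix (Fin b) (Fin c) ℝ}
    (h : LinearMap.ker M.mulVecLin = LinearMap.range E.mulVecLin) :
    LinearMap.ker (cx M).mulVecLin = LinearMap.range (cx E).mulVecLin := by
  rw [ker_mulVecLin_eq_range_iff] at h ⊢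
  rw [← cx_mul, h.1, rank_cx, rank_cx]
  exact ⟨Matrix.map_zero _ (map_zero _), h.2⟩

theorem Matrix.IsUncontrollableEigenvalue.cx {A : Matrix (Fin a) (Fin a) ℝ}
    {B : Matrix (Fin a) (Fin b) ℝ} {μ : ℝ} (h : A.IsUncontrollableEigenvalue B μ) :
    (cx A).IsUncontrollableEigenvalue (cx B) μ := by
  obtain ⟨w, hw, hwA, hwB⟩ := h
  refine ⟨cxVec w, by rwa [Ne, cxVec_eq_zero_iff], ?_, ?_⟩
  · rw [cxVec_vecMul, hwA]
    exact funext fun i => Complex.ofReal_mul μ (w i)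
  · rw [cxVec_vecMul, hwB, cxVec_eq_zero_iff]

theorem exists_mul_eq_zero_vecMul_cx_eq {ξ : Fin a → ℂ}
    (hξ : LinearIndependent ℝ ![Complex.re ∘ ξ, Complex.im ∘ ξ]) {r : Fin b → ℂ}
    {N : Matrix (Fin b) (Fin c) ℝ} (hr : r ᵥ* cx N = 0) :
    ∃ Θ : Matrix (Fin a) (Fin b) ℝ, Θ * N = 0 ∧ ξ ᵥ* cx Θ = r := by
  set P : Matrix (Fin 2) (Fin a) ℝ := of ![Complex.re ∘ ξ, Complex.im ∘ ξ]
  set C : Matrix (Fin 2) (Fin b) ℝ := of ![Complex.re ∘ r, Complex.im ∘ r]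
  obtain ⟨Q, hQ⟩ := exists_mul_eq_one_of_linearIndependent_row (A := P) hξ
  have hre : (Complex.re ∘ r) ᵥ* N = 0 := by
    rw [← re_vecMul_cx, hr]
    exact funext fun _ => Complex.zero_re
  have him : (Complex.im ∘ r) ᵥ* N = 0 := by
    rw [← im_vecMul_cx, hr]
    exact funext fun _ => Complex.zero_im
  have hCN : C * N = 0 := by
    refine funext fun i => ?_
    rw [mul_apply_eq_vecMul]
    fin_cases i
    exacts [hre, him]
  have hPΘ : P * (Q * C) = C := by
    rw [← Matrix.mul_assoc, hQ, Matrix.one_mul]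
  refine ⟨Q * C, by rw [Matrix.mul_assoc, hCN, Matrix.mul_zero], funext_re_im ?_ ?_⟩
  · rw [re_vecMul_cx]
    exact congrFun hPΘ 0
  · rw [im_vecMul_cx]
    exact congrFun hPΘ 1

end Complexification

section ConsistentSystems

variable {n m q T : ℕ} {B : Matrix (Fin n) (Fin m) ℝ} {E : Matrix (Fin n) (Fin q) ℝ}
  {U : Matrix (Fin m) (Fin T) ℝ} {X : Matrix (Fin n) (Fin (T + 1)) ℝ}
  {A₀ : Matrix (Fin n) (Fin n) ℝ}

theorem add_mem_AdatP {Θ : Matrix (Fin n) (Fin n) ℝ} {W' : Matrix (Fin q) (Fin T) ℝ}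
    (hA₀ : A₀ ∈ AdatP B E U X) (hΘ : Θ * Xminus X = E * W') : A₀ + Θ ∈ AdatP B E U X := by
  obtain ⟨W, hW⟩ := hA₀
  exact ⟨W - W', by rw [hW, Matrix.add_mul, hΘ, Matrix.mul_sub]; abel⟩

theorem vecMul_cx_mul_Xminus_of_mem_AdatP (hA₀ : A₀ ∈ AdatP B E U X) {ξ : Fin n → ℂ}
    (hB : ξ ᵥ* cx B = 0) (hE : ξ ᵥ* cx E = 0) :
    ξ ᵥ* cx A₀ ᵥ* cx (Xminus X) = ξ ᵥ* cx (Xplus X) := by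
  obtain ⟨W, hW⟩ := hA₀
  exact vecMul_vecMul_eq_of_eq_add (by rw [hW, cx_add, cx_add, cx_mul, cx_mul, cx_mul]) hB hE

theorem rank_fromCols_data_eq_rank_iff {k : ℕ} {M : Matrix (Fin k) (Fin n) ℝ}
    (hM : LinearMap.ker M.mulVecLin = LinearMap.range E.mulVecLin) (lam : ℂ) :
    (fromCols (cx M * cx (Xplus X) - lam • (cx M * cx (Xminus X))) (cx M * cx B)).rank =
        M.rank ↔
      ∀ ξ : Fin n → ℂ, ξ ᵥ* cx E = 0 → ξ ᵥ* (cx (Xplus X) - lam • cx (Xminus X)) = 0 →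
        ξ ᵥ* cx B = 0 → ξ = 0 := by
  rw [← Matrix.mul_smul, ← Matrix.mul_sub, ← rank_cx M]
  exact rank_fromCols_mul_eq_rank_iff (ker_mulVecLin_cx_eq_range hM) _ _

theorem not_isUncontrollableEigenvalue_of_mem_AdatP
    (hBE : LinearMap.range E.mulVecLin ≤ LinearMap.range B.mulVecLin) {lam : ℂ}
    (hdata : ∀ ξ : Fin n → ℂ, ξ ᵥ* cx E = 0 →
      ξ ᵥ* (cx (Xplus X) - lam • cx (Xminus X)) = 0 → ξ ᵥ* cx B = 0 → ξ = 0)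
    (hA₀ : A₀ ∈ AdatP B E U X) : ¬ (cx A₀).IsUncontrollableEigenvalue (cx B) lam := by
  rintro ⟨ξ, hξ, hξA, hξB⟩
  obtain ⟨Z, rfl⟩ := exists_mul_eq_of_range_le hBE
  have hξE : ξ ᵥ* cx (B * Z) = 0 := by rw [cx_mul, ← vecMul_vecMul, hξB, zero_vecMul]
  refine hξ (hdata ξ hξE ?_ hξB)
  rw [vecMul_sub, vecMul_smul, ← vecMul_cx_mul_Xminus_of_mem_AdatP hA₀ hξB hξE, hξA,
    smul_vecMul, sub_self]

theorem range_le_range_of_forall_not_isUncontrollableEigenvalue (hA₀ : A₀ ∈ AdatP B E U X)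
    (h : ∀ A ∈ AdatP B E U X, ¬ (cx A).IsUncontrollableEigenvalue (cx B) 1) :
    LinearMap.range E.mulVecLin ≤ LinearMap.range B.mulVecLin := by
  rintro _ ⟨z, rfl⟩
  by_contra hz
  obtain ⟨v, hvB, hvE⟩ := exists_vecMul_eq_zero_dotProduct_ne_zero hz
  rw [mulVecLin_apply] at hvE
  set z' := (v ⬝ᵥ E *ᵥ z)⁻¹ • z
  set d := v - v ᵥ* A₀
  have hAmem : A₀ + vecMulVec (E *ᵥ z') d ∈ AdatP B E U X :=
    add_mem_AdatP hA₀ (W' := vecMulVec z' (d ᵥ* Xminus X)) (by rw [vecMulVec_mul, mul_vecMulVec])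
  refine h _ hAmem (Complex.ofReal_one ▸ IsUncontrollableEigenvalue.cx ⟨v, ?_, ?_, hvB⟩)
  · rintro rfl
    simp at hvE
  · have hu : v ⬝ᵥ E *ᵥ z' = 1 := by
      rw [mulVec_smul, dotProduct_smul, smul_eq_mul, inv_mul_cancel₀ hvE]
    rw [vecMul_add, vecMul_vecMulVec, hu, one_smul, one_smul, add_sub_cancel]

theorem exists_mem_AdatP_isUncontrollableEigenvalue_of_linearIndependent
    (hA₀ : A₀ ∈ AdatP B E U X) {ξ : Fin n → ℂ}
    (hξ : LinearIndependent ℝ ![Complex.re ∘ ξ, Complex.im ∘ ξ]) {lam : ℂ}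
    (hξB : ξ ᵥ* cx B = 0) (hξA₀ : ξ ᵥ* cx A₀ ᵥ* cx (Xminus X) = lam • ξ ᵥ* cx (Xminus X)) :
    ∃ A ∈ AdatP B E U X, (cx A).IsUncontrollableEigenvalue (cx B) lam := by
  obtain ⟨Θ, hΘ, hξΘ⟩ := exists_mul_eq_zero_vecMul_cx_eq hξ (r := lam • ξ - ξ ᵥ* cx A₀)
    (by rw [sub_vecMul, smul_vecMul, hξA₀, sub_self])
  refine ⟨A₀ + Θ, add_mem_AdatP hA₀ (W' := 0) (by rw [hΘ, Matrix.mul_zero]), ξ, ?_,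
    by rw [cx_add, vecMul_add, hξΘ, add_sub_cancel], hξB⟩
  rintro rfl
  exact hξ.ne_zero 0 (funext fun _ => Complex.zero_re)

theorem exists_mem_AdatP_isUncontrollableEigenvalue_of_ne_zero (hA₀ : A₀ ∈ AdatP B E U X)
    {w : Fin n → ℝ} (hw : w ≠ 0) {μ : ℝ} (hwB : w ᵥ* B = 0)
    (hwA₀ : w ᵥ* A₀ ᵥ* Xminus X = μ • w ᵥ* Xminus X) :
    ∃ A ∈ AdatP B E U X, A.IsUncontrollableEigenvalue B μ := by
  obtain ⟨Θ, hΘ, hwΘ⟩ := exists_mul_eq_zero_vecMul_eq hw (c := μ • w - w ᵥ* A₀)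
    (by rw [sub_vecMul, smul_vecMul, hwA₀, sub_self])
  exact ⟨A₀ + Θ, add_mem_AdatP hA₀ (W' := 0) (by rw [hΘ, Matrix.mul_zero]), w, hw,
    by rw [vecMul_add, hwΘ, add_sub_cancel], hwB⟩

theorem exists_mem_AdatP_isUncontrollableEigenvalue (hA₀ : A₀ ∈ AdatP B E U X) {S : Set ℂ}
    (hS : 1 ∈ S) {lam : ℂ} (hlam : lam ∈ S) {ξ : Fin n → ℂ} (hξ : ξ ≠ 0)
    (hξE : ξ ᵥ* cx E = 0) (hξX : ξ ᵥ* (cx (Xplus X) - lam • cx (Xminus X)) = 0)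
    (hξB : ξ ᵥ* cx B = 0) :
    ∃ A ∈ AdatP B E U X, ∃ μ ∈ S, (cx A).IsUncontrollableEigenvalue (cx B) μ := by
  have hξA₀ : ξ ᵥ* cx A₀ ᵥ* cx (Xminus X) = lam • ξ ᵥ* cx (Xminus X) := by
    rwa [vecMul_cx_mul_Xminus_of_mem_AdatP hA₀ hξB hξE, ← sub_eq_zero, ← vecMul_smul,
      ← vecMul_sub]
  rcases linearIndependent_re_im_or_exists_eq_smul_cxVec ξ with hli | ⟨γ, w, rfl⟩
  · obtain ⟨A, hA, hunc⟩ :=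
      exists_mem_AdatP_isUncontrollableEigenvalue_of_linearIndependent hA₀ hli hξB hξA₀
    exact ⟨A, hA, lam, hlam, hunc⟩
  have hγ : γ ≠ 0 := by
    rintro rfl
    exact hξ (zero_smul _ _)
  have hw : w ≠ 0 := by
    rintro rfl
    exact hξ (by simp)
  simp only [smul_vecMul, cxVec_vecMul, smul_eq_zero, hγ, false_or, cxVec_eq_zero_iff]
    at hξB hξA₀
  rw [smul_comm lam γ] at hξA₀
  obtain ⟨μ, hμ, hμw⟩ := exists_ofReal_mem_and_eq_smul hS hlam (smul_right_injective _ hγ hξA₀)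
  obtain ⟨A, hA, hunc⟩ := exists_mem_AdatP_isUncontrollableEigenvalue_of_ne_zero hA₀ hw hξB hμw
  exact ⟨A, hA, μ, hμ, hunc.cx⟩

theorem forall_mem_AdatP_rank_eq_iff {k : ℕ} {M : Matrix (Fin k) (Fin n) ℝ}
    (hM : LinearMap.ker M.mulVecLin = LinearMap.range E.mulVecLin) {S : Set ℂ} (hS : 1 ∈ S)
    (hAdat : (AdatP B E U X).Nonempty) :
    (∀ A ∈ AdatP B E U X, ∀ lam ∈ S, (fromCols (cx A - lam • 1) (cx B)).rank = n) ↔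
      (LinearMap.ker M.mulVecLin ≤ LinearMap.range B.mulVecLin ∧
        ∀ lam ∈ S, (fromCols (cx M * cx (Xplus X) - lam • (cx M * cx (Xminus X)))
          (cx M * cx B)).rank = M.rank) := by
  obtain ⟨A₀, hA₀⟩ := hAdat
  have hHautus (A : Matrix (Fin n) (Fin n) ℝ) (lam : ℂ) :
      (fromCols (cx A - lam • 1) (cx B)).rank = n ↔
        ¬ (cx A).IsUncontrollableEigenvalue (cx B) lam := by
    rw [← rank_fromCols_sub_smul_one_eq_card_iff, Fintype.card_fin]
  simp only [hHautus, rank_fromCols_data_eq_rank_iff hM, hM]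
  constructor
  · intro hinf
    refine ⟨range_le_range_of_forall_not_isUncontrollableEigenvalue hA₀
      fun A hA => hinf A hA 1 hS, fun lam hlam ξ hξE hξX hξB => by_contra fun hξ => ?_⟩
    obtain ⟨A, hA, μ, hμ, hunc⟩ :=
      exists_mem_AdatP_isUncontrollableEigenvalue hA₀ hS hlam hξ hξE hξX hξB
    exact hinf A hA μ hμ hunc
  · rintro ⟨hBE, hdata⟩ A hA lam hlam
    exact not_isUncontrollableEigenvalue_of_mem_AdatP hBE (hdata lam hlam) hA

end ConsistentSystems

theorem informative_controllability_stabilizability_process_noise_general (n m q T k : ℕ)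
    (B : Matrix (Fin n) (Fin m) ℝ) (E : Matrix (Fin n) (Fin q) ℝ)
    (U : Matrix (Fin m) (Fin T) ℝ) (X : Matrix (Fin n) (Fin (T + 1)) ℝ)
    (M : Matrix (Fin k) (Fin n) ℝ)
    (hAdat : (AdatP B E U X).Nonempty)
    (hM : LinearMap.ker M.mulVecLin = LinearMap.range E.mulVecLin) :
    ((∀ A ∈ AdatP B E U X, ∀ lam : ℂ,
        (fromCols (cx A - lam • 1) (cx B)).rank = n) ↔
      (LinearMap.ker M.mulVecLin ≤ LinearMap.range B.mulVecLin ∧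
        ∀ lam : ℂ,
          (fromCols (cx M * cx (Xplus X) - lam • (cx M * cx (Xminus X)))
            (cx M * cx B)).rank = M.rank))
    ∧
    ((∀ A ∈ AdatP B E U X, ∀ lam : ℂ, 1 ≤ ‖lam‖ →
        (fromCols (cx A - lam • 1) (cx B)).rank = n) ↔
      (LinearMap.ker M.mulVecLin ≤ LinearMap.range B.mulVecLin ∧
        ∀ lam : ℂ, 1 ≤ ‖lam‖ →
          (fromCols (cx M * cx (Xplus X) - lam • (cx M * cx (Xminus X)))
            (cx M * cx B)).rank = M.rank)) :=
  ⟨by simpa using forall_mem_AdatP_rank_eq_iff hM (Set.mem_univ 1) hAdat,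
    by simpa using forall_mem_AdatP_rank_eq_iff hM (S := {lam | 1 ≤ ‖lam‖}) (by simp) hAdat⟩

/-- informativity for controllability / stabilizability with process noise
only, where ker M = im E. -/
theorem informative_controllability_stabilizability_process_noise (n m q T k : ℕ)
    (hn : 1 ≤ n) (hm : 1 ≤ m) (hq : 1 ≤ q) (hT : 1 ≤ T)
    (B : Matrix (Fin n) (Fin m) ℝ) (E : Matrix (Fin n) (Fin q) ℝ)
    (U : Matrix (Fin m) (Fin T) ℝ) (X : Matrix (Fin n) (Fin (T + 1)) ℝ)
    (M : Matrix (Fin k) (Fin n) ℝ)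
    (hAdat : (AdatP B E U X).Nonempty)
    (hM : LinearMap.ker M.mulVecLin = LinearMap.range E.mulVecLin) :
    ((∀ A ∈ AdatP B E U X, ∀ lam : ℂ,
        (fromCols (cx A - lam • 1) (cx B)).rank = n) ↔
      (LinearMap.ker M.mulVecLin ≤ LinearMap.range B.mulVecLin ∧
        ∀ lam : ℂ,
          (fromCols (cx M * cx (Xplus X) - lam • (cx M * cx (Xminus X)))
            (cx M * cx B)).rank = M.rank))
    ∧
    ((∀ A ∈ AdatP B E U X, ∀ lam : ℂ, 1 ≤ ‖lam‖ →
        (fromCols (cx A - lam • 1) (cx B)).rank = n) ↔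
      (LinearMap.ker M.mulVecLin ≤ LinearMap.range B.mulVecLin ∧
        ∀ lam : ℂ, 1 ≤ ‖lam‖ →
          (fromCols (cx M * cx (Xplus X) - lam • (cx M * cx (Xminus X)))
            (cx M * cx B)).rank = M.rank)) :=
  informative_controllability_stabilizability_process_noise_general n m q T k B E U X M hAdat hM
end
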